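/- Let ν ∈ ℂ with ν ∉ 1/2 + ℤ, and let ψ: ℂ∖(−∞,0] → V be holomorphic and satisfy the Lewis equation at every z ∈ ℂ∖(−∞,0]. Define f: ℂ∖ℝ → V by f(z) = (1 + e^{−2πiν})^{−1}·(ψ(z) + z^{−2ν−1}·η(S)(ψ(−1/z))) for z in the upper half-plane, and f(z) = (1 + e^{+2πiν})^{−1}·(ψ(z) + z^{−2ν−1}·η(S)(ψ(−1/z))) for z in the lower half-plane. Then f(z+1) = η(T)·f(z) for all z ∈ ℂ∖ℝ. -/

import Mathlib

/-!
On each half-plane `f` is a constant multiple of `g z := ψ z + z ^ (-2ν-1) • η S (ψ (-1/z))`,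
and `z`, `z + 1` lie in the same half-plane, so it suffices that `g (z + 1) = η T (g z)`.
With `w = -1/(z+1)` one has `w + 1 = z/(z+1)` and `w/(w+1) = -1/z`; applying `η (S T⁻¹)` to the
Lewis equation at `w` and using `(S T⁻¹)² = T S` rewrites `η S (ψ w)` in terms of the Lewis
equation at `z`. The only analytic input is `z ^ s = (z+1) ^ s * (z/(z+1)) ^ s`: the three
points lie in the same open half-plane, so their arguments add without wrapping around.
-/

open Complex

/-- `SL₂(ℤ)`. -/
abbrev SL2Z := Matrix.SpecialLinearGroup (Fin 2) ℤ

/-- The matrix `T = [[1,1],[0,1]]`. -/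
def Tm : SL2Z := ⟨!![1, 1; 0, 1], by norm_num [Matrix.det_fin_two_of]⟩

/-- The matrix `S = [[0,1],[−1,0]]`. -/
def Sm : SL2Z := ⟨!![0, 1; -1, 0], by norm_num [Matrix.det_fin_two_of]⟩

/-- The matrix `T' = [[1,0],[1,1]]`. -/
def Tm' : SL2Z := ⟨!![1, 0; 1, 1], by norm_num [Matrix.det_fin_two_of]⟩

/-- The matrix `−I`. -/
def negI : SL2Z := ⟨!![-1, 0; 0, -1], by norm_num [Matrix.det_fin_two_of]⟩

/-- `ψ` satisfies the Lewis equation with parameter `ν` at the point `z`. -/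
def LewisEq {V : Type*} [NormedAddCommGroup V] [NormedSpace ℂ V]
    (η : SL2Z →* Module.End ℂ V) (ν : ℂ) (ψ : ℂ → V) (z : ℂ) : Prop :=
  η Tm (ψ z) =
    ψ (z + 1) + ((z + 1) ^ (-2 * ν - 1)) • η (Sm * Tm⁻¹) (ψ (z / (z + 1)))

open Real

namespace Complex

theorem ne_zero_of_im_ne_zero {z : ℂ} (h : z.im ≠ 0) : z ≠ 0 := fun hz => h (by simp [hz])

theorem arg_mul_of_abs_sub_lt_two_pi {x y : ℂ} (hx : x ≠ 0) (hy : y ≠ 0)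
    (h : |arg x + arg y - arg (x * y)| < 2 * π) : arg (x * y) = arg x + arg y := by
  have hangle : ((arg x + arg y : ℝ) : Real.Angle) = arg (x * y) := by
    rw [Real.Angle.coe_add, arg_mul_coe_angle hx hy]
  obtain ⟨k, hk⟩ := Real.Angle.angle_eq_iff_two_pi_dvd_sub.mp hangle
  rw [hk, abs_mul, abs_of_pos two_pi_pos, mul_lt_iff_lt_one_right two_pi_pos,
    ← Int.cast_abs, ← Int.cast_one, Int.cast_lt, Int.abs_lt_one_iff] at h
  simp only [h, Int.cast_zero, mul_zero, sub_eq_zero] at hk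
  exact hk.symm

theorem arg_mul_of_im_pos {x y : ℂ} (hx : 0 < x.im) (hy : 0 < y.im) (hxy : 0 ≤ (x * y).im) :
    arg (x * y) = arg x + arg y := by
  refine arg_mul_of_abs_sub_lt_two_pi (ne_zero_of_im_ne_zero hx.ne')
    (ne_zero_of_im_ne_zero hy.ne') ?_
  have := arg_lt_pi_iff.mpr (Or.inr hx.ne')
  have := arg_lt_pi_iff.mpr (Or.inr hy.ne')
  have := arg_nonneg_iff.mpr hx.le
  have := arg_nonneg_iff.mpr hy.le
  have := arg_nonneg_iff.mpr hxy
  have := arg_le_pi (x * y)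
  rw [abs_sub_lt_iff]; constructor <;> linarith

theorem arg_mul_of_im_neg {x y : ℂ} (hx : x.im < 0) (hy : y.im < 0) (hxy : (x * y).im < 0) :
    arg (x * y) = arg x + arg y := by
  refine arg_mul_of_abs_sub_lt_two_pi (ne_zero_of_im_ne_zero hx.ne)
    (ne_zero_of_im_ne_zero hy.ne) ?_
  have := arg_neg_iff.mpr hx
  have := arg_neg_iff.mpr hy
  have := arg_neg_iff.mpr hxy
  have := neg_pi_lt_arg x
  have := neg_pi_lt_arg y
  have := neg_pi_lt_arg (x * y)
  rw [abs_sub_lt_iff]; constructor <;> linarith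

theorem mul_cpow_of_arg_mul {x y : ℂ} (hx : x ≠ 0) (hy : y ≠ 0)
    (h : arg (x * y) = arg x + arg y) (a : ℂ) : (x * y) ^ a = x ^ a * y ^ a := by
  rw [cpow_def_of_ne_zero (mul_ne_zero hx hy), cpow_def_of_ne_zero hx, cpow_def_of_ne_zero hy,
    log_mul hx hy ((arg_mul_eq_add_arg_iff hx hy).mp h), add_mul, exp_add]

theorem im_div_add_one (z : ℂ) : (z / (z + 1)).im = z.im / normSq (z + 1) := by
  rw [div_im, add_re, add_im, one_re, one_im, add_zero]
  field_simp
  ring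

theorem cpow_eq_add_one_cpow_mul {z : ℂ} (hz : z.im ≠ 0) (a : ℂ) :
    z ^ a = (z + 1) ^ a * (z / (z + 1)) ^ a := by
  have hz1 : z + 1 ≠ 0 := ne_zero_of_im_ne_zero (by simpa using hz)
  have hN : 0 < normSq (z + 1) := normSq_pos.mpr hz1
  have hsplit : (z + 1) * (z / (z + 1)) = z := mul_div_cancel₀ z hz1
  have harg : arg ((z + 1) * (z / (z + 1))) = arg (z + 1) + arg (z / (z + 1)) := by
    rcases hz.lt_or_gt with hneg | hpos
    · exact arg_mul_of_im_neg (by simpa using hneg)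
        (by rw [im_div_add_one]; exact div_neg_of_neg_of_pos hneg hN) (by rwa [hsplit])
    · exact arg_mul_of_im_pos (by simpa using hpos)
        (by rw [im_div_add_one]; exact div_pos hpos hN) (by rw [hsplit]; exact hpos.le)
  have hw : z / (z + 1) ≠ 0 := div_ne_zero (ne_zero_of_im_ne_zero hz) hz1
  rw [← mul_cpow_of_arg_mul hz1 hw harg, hsplit]

end Complex

theorem Sm_mul_Tm_inv_mul_self : Sm * Tm⁻¹ * (Sm * Tm⁻¹) = Tm * Sm := by
  ext i j
  simp only [Matrix.SpecialLinearGroup.coe_mul, Matrix.SpecialLinearGroup.coe_inv]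
  fin_cases i <;> fin_cases j <;> decide

theorem lewisEq_inversion_add_one {V : Type*} [NormedAddCommGroup V] [NormedSpace ℂ V]
    {η : SL2Z →* Module.End ℂ V} {ν : ℂ} {ψ : ℂ → V}
    (hψ : ∀ z ∈ slitPlane, LewisEq η ν ψ z) {z : ℂ} (hz : z.im ≠ 0) :
    ψ (z + 1) + (z + 1) ^ (-2 * ν - 1) • η Sm (ψ (-1 / (z + 1))) =
      η Tm (ψ z + z ^ (-2 * ν - 1) • η Sm (ψ (-1 / z))) := by
  have hz0 : z ≠ 0 := ne_zero_of_im_ne_zero hz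
  have hz1 : z + 1 ≠ 0 := ne_zero_of_im_ne_zero (by simpa using hz)
  set w := -1 / (z + 1) with hw
  have hw1 : w + 1 = z / (z + 1) := by rw [hw]; field_simp; ring
  have hww : w / (w + 1) = -1 / z := by rw [hw1, hw]; field_simp
  have hwim : w.im ≠ 0 := by
    rw [← add_zero w.im, ← one_im, ← add_im, hw1, im_div_add_one]
    exact div_ne_zero hz (normSq_pos.mpr hz1).ne'
  have hLz : η Tm (ψ z) =
      ψ (z + 1) + (z + 1) ^ (-2 * ν - 1) • η (Sm * Tm⁻¹) (ψ (w + 1)) := by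
    rw [hw1]; exact hψ z (mem_slitPlane_iff.mpr (Or.inr hz))
  have hLw : η Tm (ψ w) =
      ψ (w + 1) + (w + 1) ^ (-2 * ν - 1) • η (Sm * Tm⁻¹) (ψ (-1 / z)) := by
    rw [← hww]; exact hψ w (mem_slitPlane_iff.mpr (Or.inr hwim))
  have hSw : η Sm (ψ w) = η (Sm * Tm⁻¹) (ψ (w + 1)) +
      (w + 1) ^ (-2 * ν - 1) • η (Tm * Sm) (ψ (-1 / z)) := by
    simpa only [map_add, map_smul, ← Module.End.mul_apply, ← map_mul, inv_mul_cancel_right,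
      Sm_mul_Tm_inv_mul_self] using congrArg (η (Sm * Tm⁻¹)) hLw
  rw [hSw, map_add, map_smul, hLz, smul_add, smul_smul, hw1, ← cpow_eq_add_one_cpow_mul hz,
    map_mul η Tm Sm, Module.End.mul_apply]
  abel

theorem stmt9 {V : Type*} [NormedAddCommGroup V] [NormedSpace ℂ V]
    (η : SL2Z →* Module.End ℂ V) (ν : ℂ)
    (ψ : ℂ → V)
    (hψlewis : ∀ z ∈ Complex.slitPlane, LewisEq η ν ψ z)
    (f : ℂ → V)
    (hup : ∀ z : ℂ, 0 < z.im →
      f z = (1 + Complex.exp (-2 * Real.pi * I * ν))⁻¹ •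
        (ψ z + (z ^ (-2 * ν - 1)) • η Sm (ψ (-1 / z))))
    (hdown : ∀ z : ℂ, z.im < 0 →
      f z = (1 + Complex.exp (2 * Real.pi * I * ν))⁻¹ •
        (ψ z + (z ^ (-2 * ν - 1)) • η Sm (ψ (-1 / z)))) :
    ∀ z : ℂ, z.im ≠ 0 → f (z + 1) = η Tm (f z) := by
  intro z hz
  have him : (z + 1).im = z.im := by simp
  have hg := lewisEq_inversion_add_one hψlewis hz
  rcases hz.lt_or_gt with hneg | hpos
  · rw [hdown (z + 1) (him ▸ hneg), hdown z hneg, map_smul, hg]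
  · rw [hup (z + 1) (him ▸ hpos), hup z hpos, map_smul, hg]
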